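/- For any string s, the size of the LZ3 parsing of s is less than or equal to the size of any LZ3-type parsing of s. -/

import Mathlib

attribute [local instance] Classical.propDecidable

/-- `PermOv s i ℓ` : the substring of `s` of length `ℓ` starting at 0-indexed position `i`
has an occurrence starting at some earlier position `j < i` (possibly overlapping it). -/
def PermOv {α : Type*} (s : List α) (i ℓ : ℕ) : Prop :=
  ∃ j < i, (s.drop j).take ℓ = (s.drop i).take ℓ

/-- `PermNov s i ℓ` : the substring of `s` of length `ℓ` starting at 0-indexed position `i`
has an occurrence starting at some position `j` with `j + ℓ ≤ i` (not overlapping it). -/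
def PermNov {α : Type*} (s : List α) (i ℓ : ℕ) : Prop :=
  ∃ j, j + ℓ ≤ i ∧ (s.drop j).take ℓ = (s.drop i).take ℓ

/-- `PermOv3 s i ℓ` : the substring of `s` of length `ℓ - 1` starting at 0-indexed position `i`
(i.e. the phrase of length `ℓ` starting at `i` minus its last letter) has an occurrence
starting at some earlier position `j < i` (possibly overlapping). -/
def PermOv3 {α : Type*} (s : List α) (i ℓ : ℕ) : Prop :=
  ∃ j < i, (s.drop j).take (ℓ - 1) = (s.drop i).take (ℓ - 1)

/-- `PermNov3 s i ℓ` : the substring of `s` of length `ℓ - 1` starting at 0-indexed position `i`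
has an occurrence starting at some position `j` with `j + (ℓ - 1) ≤ i` (so this occurrence
ends before position `i`). -/
def PermNov3 {α : Type*} (s : List α) (i ℓ : ℕ) : Prop :=
  ∃ j, j + (ℓ - 1) ≤ i ∧ (s.drop j).take (ℓ - 1) = (s.drop i).take (ℓ - 1)

/-- Length of the greedy phrase starting at 0-indexed position `i`: the largest
`ℓ ≤ |s| - i` permitted by `P`, or `1` (a single letter) if no length is permitted. -/
noncomputable def phraseLen {α : Type*} (P : List α → ℕ → ℕ → Prop) (s : List α) (i : ℕ) : ℕ :=
  max 1 (Nat.findGreatest (fun ℓ => P s i ℓ) (s.length - i))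

/-- The list of phrases of the greedy parsing (w.r.t. the permission predicate `P`)
of the suffix of `s` starting at 0-indexed position `i`. -/
noncomputable def phrasesFrom {α : Type*} (P : List α → ℕ → ℕ → Prop) (s : List α) (i : ℕ) :
    List (List α) :=
  if _h : i < s.length then
    (s.drop i).take (phraseLen P s i) :: phrasesFrom P s (i + phraseLen P s i)
  else []
  termination_by s.length - i
  decreasing_by
    have h1 : 1 ≤ phraseLen P s i := by unfold phraseLen; exact Nat.le_max_left _ _
    omega

/-- The LZ parsing of `s` (phrases may overlap their earlier occurrences). -/
noncomputable def lzPhrases {α : Type*} (s : List α) : List (List α) := phrasesFrom PermOv s 0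
/-- The novLZ parsing of `s` (earlier occurrences may not overlap the phrases). -/
noncomputable def novlzPhrases {α : Type*} (s : List α) : List (List α) := phrasesFrom PermNov s 0
/-- The LZ3 parsing of `s`. -/
noncomputable def lz3Phrases {α : Type*} (s : List α) : List (List α) := phrasesFrom PermOv3 s 0
/-- The novLZ3 parsing of `s`. -/
noncomputable def novlz3Phrases {α : Type*} (s : List α) : List (List α) := phrasesFrom PermNov3 s 0

/-- `Zov`: the size (number of phrases) of the LZ parsing of `s`. -/
noncomputable def zOv {α : Type*} (s : List α) : ℕ := (lzPhrases s).length
/-- `Znon`: the size of the novLZ parsing of `s`. -/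
noncomputable def zNov {α : Type*} (s : List α) : ℕ := (novlzPhrases s).length
/-- `Zov₃`: the size of the LZ3 parsing of `s`. -/
noncomputable def zOv3 {α : Type*} (s : List α) : ℕ := (lz3Phrases s).length
/-- `Znon₃`: the size of the novLZ3 parsing of `s`. -/
noncomputable def zNov3 {α : Type*} (s : List α) : ℕ := (novlz3Phrases s).length

/-- `ts` is an LZ-type parsing of `s`: a decomposition of `s` into nonempty strings such that
each `tᵢ` is a single letter or occurs in `s[1..|t₁⋯tᵢ|-1]`. -/
def IsLZTypeParsing {α : Type*} (s : List α) (ts : List (List α)) : Prop :=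
  ts.flatten = s ∧ (∀ t ∈ ts, t ≠ []) ∧
    ∀ i (h : i < ts.length),
      ts[i].length = 1 ∨ ts[i] <:+: s.take ((ts.take (i + 1)).flatten.length - 1)

/-- `ts` is a novLZ-type parsing of `s`: a decomposition of `s` into nonempty strings such that
each `tᵢ` is a single letter or occurs in `t₁⋯tᵢ₋₁`. -/
def IsNovLZTypeParsing {α : Type*} (s : List α) (ts : List (List α)) : Prop :=
  ts.flatten = s ∧ (∀ t ∈ ts, t ≠ []) ∧
    ∀ i (h : i < ts.length),
      ts[i].length = 1 ∨ ts[i] <:+: (ts.take i).flatten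

/-- `ts` is an LZ3-type parsing of `s`: a decomposition of `s` into nonempty strings such that
each `tᵢ` minus its last letter occurs in `s[1..|t₁⋯tᵢ|-2]`. -/
def IsLZ3TypeParsing {α : Type*} (s : List α) (ts : List (List α)) : Prop :=
  ts.flatten = s ∧ (∀ t ∈ ts, t ≠ []) ∧
    ∀ i (h : i < ts.length),
      ts[i].dropLast <:+: s.take ((ts.take (i + 1)).flatten.length - 2)

/-- `ts` is a novLZ3-type parsing of `s`: a decomposition of `s` into nonempty strings such that
each `tᵢ` minus its last letter occurs in `t₁⋯tᵢ₋₁`. -/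
def IsNovLZ3TypeParsing {α : Type*} (s : List α) (ts : List (List α)) : Prop :=
  ts.flatten = s ∧ (∀ t ∈ ts, t ≠ []) ∧
    ∀ i (h : i < ts.length),
      ts[i].dropLast <:+: (ts.take i).flatten

/-! Greedy stays ahead. If a phrase `t` of any LZ3-type parsing starts at or before the start `g`
of the current greedy phrase, then the part of `t` from `g` on, minus its last letter, is a suffix
of `t.dropLast` and so also has an occurrence starting before `g`. Hence the greedy phrase starting
at `g` reaches at least as far as `t`, and by induction the `k`-th greedy phrase boundary is never
behind the `k`-th boundary of the other parsing. -/

namespace List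

variable {α : Type*}

theorem drop_add_take_sub_eq_of_take_drop_eq {s : List α} {p q m : ℕ}
    (h : (s.drop q).take m = (s.drop p).take m) (d : ℕ) :
    (s.drop (q + d)).take (m - d) = (s.drop (p + d)).take (m - d) := by
  simpa only [drop_take, drop_drop, Nat.add_comm d] using congrArg (drop d) h

theorem exists_take_drop_eq_of_infix_take {l s : List α} {N : ℕ}
    (h : l <:+: s.take N) : ∃ q, q + l.length ≤ N ∧ (s.drop q).take l.length = l := by
  obtain ⟨u, v, huv⟩ := h
  have hlen := congrArg length huv
  simp only [length_append, length_take] at hlen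
  refine ⟨u.length, by omega, ?_⟩
  have := congrArg (fun x => (x.drop u.length).take l.length) huv
  simp only [append_assoc, drop_left, take_left, drop_take, take_take,
    min_eq_left (show l.length ≤ N - u.length by omega)] at this
  exact this.symm

theorem length_flatten_take_le (L : List (List α)) (k : ℕ) :
    (L.take k).flatten.length ≤ L.flatten.length :=
  ((L.take_sublist k).flatten).length_le

theorem length_flatten_take_succ {L : List (List α)} {k : ℕ} (hk : k < L.length) :
    (L.take (k + 1)).flatten.length = (L.take k).flatten.length + L[k].length := by
  rw [take_add_one, getElem?_eq_getElem hk, Option.toList_some, flatten_append,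
    flatten_singleton, length_append]

theorem take_drop_length_flatten_take {L : List (List α)} {k : ℕ} (hk : k < L.length) :
    (L.flatten.drop (L.take k).flatten.length).take L[k].length = L[k] := by
  have hsplit : L.flatten = (L.take k).flatten ++ L[k] ++ (L.drop (k + 1)).flatten := by
    rw [append_assoc, ← flatten_cons, ← drop_eq_getElem_cons hk, ← flatten_append,
      take_append_drop]
  rw [hsplit, append_assoc, drop_left, take_left]

end List

section Greedy

variable {α : Type*}

theorem one_le_phraseLen (P : List α → ℕ → ℕ → Prop) (s : List α) (i : ℕ) :
    1 ≤ phraseLen P s i :=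
  le_max_left _ _

theorem le_phraseLen {P : List α → ℕ → ℕ → Prop} {s : List α} {i ℓ : ℕ}
    (h : P s i ℓ) (hℓ : ℓ ≤ s.length - i) : ℓ ≤ phraseLen P s i :=
  (Nat.le_findGreatest hℓ h).trans (le_max_right _ _)

noncomputable def nextPhraseStart (P : List α → ℕ → ℕ → Prop) (s : List α) (i : ℕ) : ℕ :=
  i + phraseLen P s i

theorem length_phrasesFrom_le {P : List α → ℕ → ℕ → Prop} {s : List α} {i j : ℕ}
    (h : s.length ≤ (nextPhraseStart P s)^[j] i) : (phrasesFrom P s i).length ≤ j := by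
  induction j generalizing i with
  | zero => rw [phrasesFrom, dif_neg (by simpa using h), List.length_nil]
  | succ j ih =>
    rw [phrasesFrom]
    split
    · exact Nat.succ_le_succ (ih h)
    · exact Nat.zero_le _

theorem PermOv3.of_le {s : List α} {p ℓ p' : ℕ} (h : PermOv3 s p ℓ) (hp : p ≤ p') :
    PermOv3 s p' (p + ℓ - p') := by
  obtain ⟨q, hq, heq⟩ := h
  refine ⟨q + (p' - p), by omega, ?_⟩
  have hlen : p + ℓ - p' - 1 = ℓ - 1 - (p' - p) := by omega
  rw [hlen, ← Nat.add_sub_cancel' hp]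
  simpa only [Nat.add_sub_cancel_left] using List.drop_add_take_sub_eq_of_take_drop_eq heq _

theorem PermOv3.add_le_nextPhraseStart {s : List α} {b ℓ g : ℕ} (h : PermOv3 s b ℓ)
    (hb : b ≤ g) (hend : b + ℓ ≤ s.length) : b + ℓ ≤ nextPhraseStart PermOv3 s g := by
  have := le_phraseLen (h.of_le hb) (by omega)
  rw [nextPhraseStart]
  omega

end Greedy

namespace IsLZ3TypeParsing

variable {α : Type*} {ts : List (List α)}

theorem permOv3 (h : IsLZ3TypeParsing ts.flatten ts) {k : ℕ} (hk : k < ts.length)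
    (h2 : 2 ≤ ts[k].length) : PermOv3 ts.flatten (ts.take k).flatten.length ts[k].length := by
  obtain ⟨q, hq, hocc⟩ := List.exists_take_drop_eq_of_infix_take (h.2.2 k hk)
  rw [List.length_dropLast] at hq hocc
  rw [List.length_flatten_take_succ hk] at hq
  refine ⟨q, by omega, ?_⟩
  have hphrase := congrArg (List.take (ts[k].length - 1)) (List.take_drop_length_flatten_take hk)
  rw [List.take_take, min_eq_left (Nat.sub_le _ _)] at hphrase
  rw [hocc, List.dropLast_eq_take, hphrase]

theorem length_flatten_take_le_iterate (h : IsLZ3TypeParsing ts.flatten ts) {k : ℕ}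
    (hk : k ≤ ts.length) :
    (ts.take k).flatten.length ≤ (nextPhraseStart PermOv3 ts.flatten)^[k] 0 := by
  induction k with
  | zero => simp
  | succ k ih =>
    have hk' : k < ts.length := hk
    have hend := ts.length_flatten_take_le (k + 1)
    rw [List.length_flatten_take_succ hk'] at hend ⊢
    rw [Function.iterate_succ_apply']
    by_cases h2 : 2 ≤ ts[k].length
    · exact (h.permOv3 hk' h2).add_le_nextPhraseStart (ih hk'.le) hend
    · have := one_le_phraseLen PermOv3 ts.flatten ((nextPhraseStart PermOv3 ts.flatten)^[k] 0)
      have := ih hk'.le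
      rw [nextPhraseStart]
      omega

end IsLZ3TypeParsing

/-- The LZ3 parsing of any string `s` has the least size among all LZ3-type parsings of `s`. -/
theorem lz3_optimal {α : Type*} (s : List α) (ts : List (List α))
    (h : IsLZ3TypeParsing s ts) : zOv3 s ≤ ts.length := by
  obtain rfl := h.1
  refine length_phrasesFrom_le ?_
  simpa only [List.take_length] using h.length_flatten_take_le_iterate le_rfl
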